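/- arXiv:1310.1136 — 3 statements merged into one kernel-verified Lean document; each statement's English description precedes it below -/
import Mathlib

section
/- Let A be a complete unital normed algebra over ℂ, let J be a closed two-sided ideal of A, and let Q ∈ A be an element whose image in A/J is an idempotent, i.e. Q^2 - Q ∈ J. Then exp((2·π·i) • Q) - 1 ∈ J. (This is the well-definedness of the element e^{2πiQ} ∈ (J)^+ used to define the odd index map ∂₁([q]) = [e^{2πiQ}].) -/
open NormedSpace Complex Nat

private lemma pow_sub_self_mem {A : Type*} [Ring A] (J : TwoSidedIdeal A)
    (Q : A) (hQ : Q ^ 2 - Q ∈ J) : ∀ n, Q ^ (n + 1) - Q ∈ J := by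
  intro n
  induction n with
  | zero => simp [J.zero_mem]
  | succ n ih =>
    have : Q ^ (n + 2) - Q = (Q ^ (n + 1) - Q) * Q + (Q ^ 2 - Q) := by
      rw [pow_succ, sub_mul, sq]; abel
    rw [this]
    exact J.add_mem (J.mul_mem_right _ _ ih) hQ

/-- Let `J` be a closed two-sided ideal of a complex unital Banach algebra `A`, and
let `Q ∈ A` be an idempotent modulo `J`, i.e. `Q^2 - Q ∈ J`. Then
`exp((2πi) • Q) - 1 ∈ J`. This is the well-definedness of the element `e^{2πiQ}`
used in the construction of the odd index map `∂₁([q]) = [e^{2πiQ}]`. -/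
theorem exp_two_pi_I_smul_sub_one_mem {A : Type*} [NormedRing A] [NormedAlgebra ℂ A]
    [CompleteSpace A] (J : TwoSidedIdeal A) (hJ : IsClosed (J : Set A))
    (Q : A) (hQ : Q ^ 2 - Q ∈ J) :
    NormedSpace.exp ((2 * Real.pi * Complex.I) • Q) - 1 ∈ J := by
  set z : ℂ := 2 * Real.pi * Complex.I with hz
  -- series for exp (z • Q)
  have h1 : HasSum (fun n => ((n ! : ℂ)⁻¹ * z ^ n) • Q ^ n)
      (NormedSpace.exp (z • Q)) := by
    have := NormedSpace.exp_series_hasSum_exp' (𝕂 := ℂ) (z • Q)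
    convert this using 2 with n
    rw [smul_pow, smul_smul]
  -- scalar series for exp z, smul Q; note exp z = 1
  have hez : Complex.exp z = 1 := by
    rw [hz]
    simpa [mul_assoc] using Complex.exp_int_mul_two_pi_mul_I 1
  have h2 : HasSum (fun n => ((n ! : ℂ)⁻¹ * z ^ n) • Q) Q := by
    have hs : HasSum (fun n => (n ! : ℂ)⁻¹ * z ^ n) (NormedSpace.exp z) := by
      simpa [smul_eq_mul, mul_comm] using NormedSpace.exp_series_hasSum_exp' (𝕂 := ℂ) z
    rw [← Complex.exp_eq_exp_ℂ, hez] at hs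
    simpa using hs.smul_const Q
  have h3 : HasSum (fun n => ((n ! : ℂ)⁻¹ * z ^ n) • Q ^ n - ((n ! : ℂ)⁻¹ * z ^ n) • Q)
      (NormedSpace.exp (z • Q) - Q) := h1.sub h2
  -- drop the n = 0 term
  have h4 : HasSum (fun n => (((n + 1)! : ℂ)⁻¹ * z ^ (n + 1)) • Q ^ (n + 1)
        - (((n + 1)! : ℂ)⁻¹ * z ^ (n + 1)) • Q)
      (NormedSpace.exp (z • Q) - Q - ((1 : A) - Q)) := by
    have := (hasSum_nat_add_iff' (f := fun n => ((n ! : ℂ)⁻¹ * z ^ n) • Q ^ n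
        - ((n ! : ℂ)⁻¹ * z ^ n) • Q) (g := NormedSpace.exp (z • Q) - Q) 1).mpr ?_
    · simpa using this
    · simpa using h3
  have h5 : NormedSpace.exp (z • Q) - 1 ∈ J := by
    have ht := h4.tendsto_sum_nat
    have key : ∀ N, ∑ n ∈ Finset.range N,
        ((((n + 1)! : ℂ)⁻¹ * z ^ (n + 1)) • Q ^ (n + 1)
          - (((n + 1)! : ℂ)⁻¹ * z ^ (n + 1)) • Q) ∈ J := by
      intro N
      apply sum_mem
      intro n _
      rw [← smul_sub, Algebra.smul_def]
      exact J.mul_mem_left _ _ (pow_sub_self_mem J Q hQ n)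
    have hmem := hJ.mem_of_tendsto ht (Filter.Eventually.of_forall key)
    have : NormedSpace.exp (z • Q) - Q - (1 - Q) = NormedSpace.exp (z • Q) - 1 := by abel
    rwa [this] at hmem
  exact h5
end

section
/- Let Γ be a group and Γ′ a torsion-free normal subgroup of Γ (every element of Γ′ of finite order is the identity) such that the quotient Γ/Γ′ is residually finite (for every x ≠ 1 in Γ/Γ′ there exist a finite group Q and a group homomorphism f : Γ/Γ′ →* Q with f x ≠ 1). Then for every element γ ∈ Γ of finite order there exists a normal subgroup N of Γ of finite index such that the image of γ in Γ/N has the same order as γ: orderOf (QuotientGroup.mk γ : Γ ⧸ N) = orderOf γ. -/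
/-- If `Γ` has a torsion-free normal subgroup `Γ′` such that `Γ/Γ′` is residually
finite, then for every finite order element `γ ∈ Γ` there is a finite index normal
subgroup `N` of `Γ` such that the image of `γ` in `Γ/N` has the same order as `γ`. -/
theorem order_preserved_in_finite_quotient {Γ : Type*} [Group Γ]
    (Γ' : Subgroup Γ) [Γ'.Normal]
    (htf : ∀ g ∈ Γ', IsOfFinOrder g → g = 1)
    (hrf : ∀ x : Γ ⧸ Γ', x ≠ 1 → ∃ (Q : Type) (_ : Group Q) (_ : Finite Q),
      ∃ f : Γ ⧸ Γ' →* Q, f x ≠ 1)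
    (γ : Γ) (hγ : IsOfFinOrder γ) :
    ∃ N : Subgroup Γ, ∃ _ : N.Normal, N.index ≠ 0 ∧
      orderOf (QuotientGroup.mk γ : Γ ⧸ N) = orderOf γ := by
  classical
  set n := orderOf γ with hn
  have hnpos : 0 < n := hγ.orderOf_pos
  set π := QuotientGroup.mk' Γ' with hπ
  set x : Γ ⧸ Γ' := π γ with hx
  -- key: if γ^d ∈ Γ', then γ^d = 1
  have key : ∀ d : ℕ, x ^ d = 1 → γ ^ d = 1 := by
    intro d hd
    have hmem : γ ^ d ∈ Γ' := by
      rwa [hx, ← map_pow, ← MonoidHom.mem_ker, QuotientGroup.ker_mk'] at hd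
    exact htf _ hmem (hγ.pow)
  -- for each d with x^d ≠ 1, choose a kernel of finite index
  have choice : ∀ d : ℕ, ∃ K : Subgroup (Γ ⧸ Γ'), K.Normal ∧ K.index ≠ 0 ∧
      (x ^ d ≠ 1 → x ^ d ∉ K) := by
    intro d
    by_cases h : x ^ d = 1
    · exact ⟨⊤, inferInstance, by simp [Subgroup.index_top], fun h' => absurd h h'⟩
    · obtain ⟨Q, _, _, f, hf⟩ := hrf _ h
      refine ⟨f.ker, f.normal_ker, ?_, fun _ hk => hf (by rwa [MonoidHom.mem_ker] at hk)⟩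
      rw [Subgroup.index_ker]
      exact Nat.card_ne_zero.2 ⟨⟨1, 1, map_one f⟩, Set.toFinite _⟩
  choose K hKnormal hKindex hKnotmem using choice
  -- intersect over d < n
  set Kinf : Subgroup (Γ ⧸ Γ') := ⨅ d : Fin n, K d with hKinf
  have hKinfNormal : Kinf.Normal := by
    rw [hKinf]
    exact ⟨fun g hg h => Subgroup.mem_iInf.2 fun d =>
      (hKnormal d).conj_mem _ (Subgroup.mem_iInf.1 hg d) h⟩
  have hKinfIndex : Kinf.index ≠ 0 := by
    have : ∀ d : Fin n, (K (d : ℕ)).FiniteIndex := fun d => ⟨hKindex d⟩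
    have : Kinf.FiniteIndex := Subgroup.finiteIndex_iInf (fun d : Fin n => this d)
    exact this.index_ne_zero
  refine ⟨Kinf.comap π, hKinfNormal.comap π, ?_, ?_⟩
  · rwa [Subgroup.index_comap_of_surjective _ (QuotientGroup.mk'_surjective Γ')]
  · -- order of mk γ in Γ ⧸ N equals n
    set N := Kinf.comap π
    have hdvd : orderOf (QuotientGroup.mk γ : Γ ⧸ N) ∣ n := by
      apply orderOf_dvd_of_pow_eq_one
      rw [← QuotientGroup.mk_pow, pow_orderOf_eq_one γ, QuotientGroup.mk_one]
    set m := orderOf (QuotientGroup.mk γ : Γ ⧸ N) with hm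
    rcases eq_or_lt_of_le (Nat.le_of_dvd hnpos hdvd) with h | h
    · exact h
    · exfalso
      have hmem : γ ^ m ∈ N := by
        have : (QuotientGroup.mk γ : Γ ⧸ N) ^ m = 1 := pow_orderOf_eq_one _
        rwa [← QuotientGroup.mk_pow, QuotientGroup.eq_one_iff] at this
      have hxK : x ^ m ∈ Kinf := by
        have := hmem
        simpa [N, Subgroup.mem_comap, map_pow] using this
      have hxne : x ^ m ≠ 1 := by
        intro h1
        have hγm : γ ^ m = 1 := key m h1
        have hnm : n ∣ m := orderOf_dvd_of_pow_eq_one hγm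
        have hmpos : 0 < m := Nat.pos_of_dvd_of_pos hdvd hnpos
        exact absurd (Nat.le_of_dvd hmpos hnm) (by omega)
      exact hKnotmem m hxne (by
        have : Kinf ≤ K m := iInf_le (fun d : Fin n => K d) ⟨m, h⟩
        exact this hxK)
end

section
/- Let Γ be a finitely generated group with a torsion-free normal subgroup Γ′ (every element of Γ′ of finite order is the identity) such that Γ/Γ′ is residually finite (for every x ≠ 1 in Γ/Γ′ there exist a finite group Q and a group homomorphism f : Γ/Γ′ →* Q with f x ≠ 1). Let n be a natural number, φ : FreeGroup (Fin n) →* MulAut Γ a homomorphism, and let G := Γ ⋊[φ] FreeGroup (Fin n) be the corresponding semidirect product. Then for every finite subset F of G there exist a finite group Q and a group homomorphism h : G →* Q such that for every element x ∈ F of finite order, orderOf (h x) = orderOf x. (Consequently Γ is strongly finitely embeddable into Hilbert space.) -/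
open SemidirectProduct


namespace FreeGroup
variable {α : Type*} [DecidableEq α]

/-- Reducedness as a chain condition. -/
def IsRed (L : List (α × Bool)) : Prop :=
  List.Chain' (fun a b => ¬(a.1 = b.1 ∧ b.2 = !a.2)) L

theorem reduce_eq_self_of_isRed {L : List (α × Bool)} (h : IsRed L) : reduce L = L := by
  induction L with
  | nil => rfl
  | cons x L ih =>
    have hL : IsRed L := (List.isChain_cons.mp h).2
    rw [reduce.cons, ih hL]
    cases L with
    | nil => rfl
    | cons y t =>
      have hxy : ¬(x.1 = y.1 ∧ y.2 = !x.2) := (List.isChain_cons_cons.mp h).1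
      have : ¬(x.1 = y.1 ∧ x.2 = !y.2) := by
        rintro ⟨h1, h2⟩; exact hxy ⟨h1, by simp [h2]⟩
      simp [this]

theorem isRed_reduce (L : List (α × Bool)) : IsRed (reduce L) := by
  induction L with
  | nil => exact List.isChain_nil
  | cons x L ih =>
    rw [reduce.cons]
    cases hL : reduce L with
    | nil => exact List.isChain_singleton _
    | cons y t =>
      rw [hL] at ih
      by_cases h : x.1 = y.1 ∧ x.2 = !y.2
      · simp only [h, and_self, if_true]
        exact (List.isChain_cons.mp ih).2
      · simp only [h, if_false]
        refine List.isChain_cons_cons.mpr ⟨?_, ih⟩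
        rintro ⟨h1, h2⟩
        exact h ⟨h1, by simp [h2]⟩

theorem isRed_toWord (x : FreeGroup α) : IsRed x.toWord := by
  rw [← reduce_toWord]; exact isRed_reduce _

theorem toWord_pow_of_cyc (w : FreeGroup α)
    (hcyc : ∀ b ∈ w.toWord.getLast?, ∀ a ∈ w.toWord.head?, ¬(b.1 = a.1 ∧ a.2 = !b.2)) :
    ∀ n : ℕ, (w ^ n).toWord = (List.replicate n w.toWord).flatten := by
  set L := w.toWord with hLdef
  have key : ∀ n : ℕ, IsRed ((List.replicate n L).flatten) ∧
      (n ≠ 0 → ((List.replicate n L).flatten).head? = L.head?) := by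
    intro n
    induction n with
    | zero => exact ⟨List.isChain_nil, fun h => absurd rfl h⟩
    | succ m ih =>
      have hJ : (List.replicate (m+1) L).flatten = L ++ (List.replicate m L).flatten := by
        rw [List.replicate_succ, List.flatten_cons]
      constructor
      · rw [hJ]
        refine List.isChain_append.mpr ⟨isRed_toWord w, ih.1, ?_⟩
        intro b hb a ha
        rcases Nat.eq_zero_or_pos m with hm | hm
        · subst hm; simp at ha
        · rw [ih.2 hm.ne'] at ha
          exact hcyc b hb a ha
      · intro _
        rw [hJ]
        cases hL : L with
        | nil => simp [hL]
        | cons x t => simp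
  intro n
  induction n with
  | zero => simp
  | succ m ih =>
    have h1 : w ^ (m+1) = mk (L ++ (List.replicate m L).flatten) := by
      rw [pow_succ', ← mul_mk]
      congr 1
      · rw [hLdef, mk_toWord]
      · rw [← ih, mk_toWord]
    rw [h1, toWord_mk, List.replicate_succ, List.flatten_cons]
    apply reduce_eq_self_of_isRed
    rw [← List.flatten_cons, ← List.replicate_succ]
    exact (key (m+1)).1

theorem pow_ne_one_aux :
    ∀ (N : ℕ) (w : FreeGroup α), norm w ≤ N → w ≠ 1 → ∀ n : ℕ, n ≠ 0 → w ^ n ≠ 1 := by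
  intro N
  induction N with
  | zero =>
    intro w hN hw
    exact absurd (norm_eq_zero.mp (Nat.le_zero.mp hN)) hw
  | succ N ih =>
    intro w hN hw n hn
    have hLne : w.toWord ≠ [] := fun h => hw (toWord_eq_nil_iff.mp h)
    set L := w.toWord with hLdef
    set a := L.head hLne
    set b := L.getLast hLne
    by_cases hc : b.1 = a.1 ∧ a.2 = !b.2
    · -- not cyclically reduced : conjugate
      have hT : L = a :: L.tail := (List.cons_head_tail hLne).symm
      have hTne : L.tail ≠ [] := by
        intro h
        have : L = [a] := by rw [hT, h]
        have hba : b = a := by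
          have := List.getLast_congr (l₂ := [a]) hLne (by simp) this
          simpa [b] using this
        rw [hba] at hc
        simp at hc
      set M := L.tail.dropLast with hMdef
      have hTd : L.tail = M ++ [L.tail.getLast hTne] := (List.dropLast_append_getLast hTne).symm
      have hbT : L.tail.getLast hTne = b := by
        have h1 : L.getLast hLne = (a :: L.tail).getLast (by simp) := List.getLast_congr _ _ hT
        rw [List.getLast_cons hTne] at h1
        exact h1.symm
      have hLsplit : L = a :: (M ++ [b]) := by rw [hT, ← hbT, ← hTd]
      have hb : b = (a.1, !a.2) := by
        have h2 : b.2 = !a.2 := by rw [hc.2]; simp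
        exact Prod.ext hc.1 h2
      set u := mk [a] with hu
      set v := mk M with hv
      have huinv : u⁻¹ = mk [b] := by
        rw [hu, inv_mk, hb]; rfl
      have hwconj : w = u * v * u⁻¹ := by
        have hl : [a] ++ M ++ [b] = a :: (M ++ [b]) := by simp
        rw [huinv, hu, hv, mul_mk, mul_mk, hl, ← hLsplit, hLdef, mk_toWord]
      have hvne : v ≠ 1 := by
        intro h
        rw [h, mul_one, mul_inv_cancel] at hwconj
        exact hw hwconj
      have hnormv : norm v ≤ N := by
        have h1 : norm v ≤ M.length := norm_mk_le
        have h2 : L.length = M.length + 2 := by rw [hLsplit]; simp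
        have h3 : norm w = L.length := rfl
        omega
      intro hcon
      apply ih v hnormv hvne n hn
      have : w ^ n = u * v ^ n * u⁻¹ := by rw [hwconj, conj_pow]
      rw [this] at hcon
      have := congrArg (fun z => u⁻¹ * z * u) hcon
      simpa [mul_assoc] using this
    · -- cyclically reduced
      have hcyc : ∀ b' ∈ L.getLast?, ∀ a' ∈ L.head?, ¬(b'.1 = a'.1 ∧ a'.2 = !b'.2) := by
        intro b' hb' a' ha'
        rw [List.getLast?_eq_getLast hLne] at hb'
        rw [List.head?_eq_head hLne] at ha'
        have e1 : b = b' := by simpa using hb'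
        have e2 : a = a' := by simpa using ha'
        rw [← e1, ← e2]
        exact hc
      intro hcon
      have := toWord_pow_of_cyc w hcyc n
      rw [hcon, toWord_one] at this
      cases n with
      | zero => exact hn rfl
      | succ m =>
        rw [List.replicate_succ, List.flatten_cons] at this
        exact hLne (List.append_eq_nil_iff.mp this.symm).1

theorem ne_one_of_pow {w : FreeGroup α} (hw : w ≠ 1) {n : ℕ} (hn : n ≠ 0) : w ^ n ≠ 1 :=
  pow_ne_one_aux (norm w) w le_rfl hw n hn

theorem eq_one_of_isOfFinOrder {w : FreeGroup α} (h : IsOfFinOrder w) : w = 1 := by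
  by_contra hw
  obtain ⟨m, hm, hwm⟩ := h.exists_pow_eq_one
  exact ne_one_of_pow hw hm.ne' hwm

end FreeGroup


section aux
variable {Γ : Type*} [Group Γ]

theorem finite_monoidHom_of_fg (Q : Type*) [Group Q] [Finite Q] [hFG : Group.FG Γ] :
    Finite (Γ →* Q) := by
  obtain ⟨S, hS, hSfin⟩ := Group.fg_iff.mp hFG
  haveI : Finite S := hSfin
  refine Finite.of_injective (fun f => (fun s : S => f s)) ?_
  intro f g h
  refine MonoidHom.eq_of_eqOn_dense hS ?_
  intro s hs
  exact congrFun h ⟨s, hs⟩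

theorem comap_iInf_ker (Q : Type*) [Group Q] (e : Γ ≃* Γ) :
    (⨅ f : Γ →* Q, f.ker).comap e.toMonoidHom = ⨅ f : Γ →* Q, f.ker := by
  rw [Subgroup.comap_iInf]
  apply le_antisymm
  · refine le_iInf fun f => ?_
    have h1 : ((f.comp e.symm.toMonoidHom).ker).comap e.toMonoidHom = f.ker := by
      rw [MonoidHom.comap_ker]
      congr 1
      ext x; simp
    rw [← h1]
    exact iInf_le _ (f.comp e.symm.toMonoidHom)
  · refine le_iInf fun f => ?_
    rw [MonoidHom.comap_ker]
    exact iInf_le _ (f.comp e.toMonoidHom)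

theorem map_iInf_ker (Q : Type*) [Group Q] (e : Γ ≃* Γ) :
    (⨅ f : Γ →* Q, f.ker).map e.toMonoidHom = ⨅ f : Γ →* Q, f.ker := by
  rw [show e.toMonoidHom = (e : Γ →* Γ) from rfl, Subgroup.map_equiv_eq_comap_symm]
  exact comap_iInf_ker Q e.symm

instance iInf_ker_normal (Q : Type*) [Group Q] : (⨅ f : Γ →* Q, f.ker).Normal := by
  constructor
  intro x hx g
  rw [Subgroup.mem_iInf] at hx ⊢
  intro f
  have := hx f
  simp only [MonoidHom.mem_ker] at this ⊢
  simp [this]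

end aux



/-- Let `Γ` be a finitely generated group with a torsion-free normal subgroup `Γ′`
such that `Γ/Γ′` is residually finite, and let `G = Γ ⋊[φ] FreeGroup (Fin n)` for a
homomorphism `φ : FreeGroup (Fin n) →* MulAut Γ`. Then for every finite subset `F`
of `G` there is a homomorphism `h` from `G` to a finite group `Q` preserving the
orders of all finite order elements of `F`. (Hence `Γ` is strongly finitely
embeddable into Hilbert space.) -/
theorem strongly_finitely_embeddable_of_virtually_torsion_free {Γ : Type*} [Group Γ]
    [hFG : Group.FG Γ] (Γ' : Subgroup Γ) [Γ'.Normal]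
    (htf : ∀ g ∈ Γ', IsOfFinOrder g → g = 1)
    (hrf : ∀ x : Γ ⧸ Γ', x ≠ 1 → ∃ (Q : Type) (_ : Group Q) (_ : Finite Q),
      ∃ f : Γ ⧸ Γ' →* Q, f x ≠ 1)
    (n : ℕ) (φ : FreeGroup (Fin n) →* MulAut Γ)
    (F : Finset (Γ ⋊[φ] FreeGroup (Fin n))) :
    ∃ (Q : Type) (_ : Group Q) (_ : Finite Q),
      ∃ h : Γ ⋊[φ] FreeGroup (Fin n) →* Q,
        ∀ x ∈ F, IsOfFinOrder x → orderOf (h x) = orderOf x := by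
  classical
  choose Qrf instGrp instFin frf hfrf using hrf
  -- the finite set of powers to separate
  set T : Finset Γ := F.biUnion
    (fun x => (Finset.range (orderOf x.left + 1)).image (x.left ^ ·)) with hTdef
  set ι := {t : {x // x ∈ T} // (QuotientGroup.mk t.1 : Γ ⧸ Γ') ≠ 1} with hιdef
  haveI : Finite ι := Subtype.finite
  set Q₀ := ∀ i : ι, Qrf (QuotientGroup.mk i.1.1) i.2 with hQ₀def
  letI : ∀ i : ι, Group (Qrf (QuotientGroup.mk i.1.1) i.2) := fun i => instGrp _ _
  haveI : ∀ i : ι, Finite (Qrf (QuotientGroup.mk i.1.1) i.2) := fun i => instFin _ _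
  letI : Group Q₀ := Pi.group
  haveI : Finite Q₀ := Pi.finite
  set f0 : Γ →* Q₀ := Pi.monoidHom
    (fun i => (frf (QuotientGroup.mk i.1.1) i.2).comp (QuotientGroup.mk' Γ')) with hf0def
  -- the characteristic finite index subgroup
  haveI : Finite (Γ →* Q₀) := finite_monoidHom_of_fg Q₀
  set K : Subgroup Γ := ⨅ f : Γ →* Q₀, f.ker with hKdef
  haveI hKn : K.Normal := iInf_ker_normal Q₀
  haveI : K.FiniteIndex := Subgroup.finiteIndex_iInf fun f => inferInstance
  haveI : Finite (Γ ⧸ K) := Subgroup.finite_quotient_of_finiteIndex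
  have hKmap : ∀ w : FreeGroup (Fin n), K.map (φ w).toMonoidHom = K :=
    fun w => map_iInf_ker Q₀ (φ w)
  -- the induced action on Γ ⧸ K
  set ψ : FreeGroup (Fin n) →* MulAut (Γ ⧸ K) :=
    { toFun := fun w => QuotientGroup.congr K K (φ w) (hKmap w)
      map_one' := by
        ext q
        induction q using QuotientGroup.induction_on with
        | H x => simp [QuotientGroup.congr_mk]
      map_mul' := fun w₁ w₂ => by
        ext q
        induction q using QuotientGroup.induction_on with
        | H x => simp [QuotientGroup.congr_mk]; rfl } with hψdef
  have hψmk : ∀ (w : FreeGroup (Fin n)) (g : Γ),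
      ψ w (QuotientGroup.mk g) = QuotientGroup.mk (φ w g) :=
    fun w g => rfl
  -- the target group
  haveI : Finite (MulAut (Γ ⧸ K)) :=
    Finite.of_injective (fun e => (e : Γ ⧸ K → Γ ⧸ K)) (fun a b h => by
      ext x; exact congrFun h x)
  set G₁ := (Γ ⧸ K) ⋊[MonoidHom.id (MulAut (Γ ⧸ K))] MulAut (Γ ⧸ K) with hG₁def
  haveI : Finite G₁ := Finite.of_injective (fun x : G₁ => (x.left, x.right))
    (fun a b h => SemidirectProduct.ext (congrArg Prod.fst h) (congrArg Prod.snd h))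
  haveI : Small.{0} G₁ := Countable.toSmall _
  set e : G₁ ≃* Shrink G₁ := (Equiv.mulEquiv (equivShrink G₁).symm).symm with hedef
  refine ⟨Shrink G₁, inferInstance, Finite.of_equiv G₁ (equivShrink G₁), ?_⟩
  set f₁ : Γ →* G₁ := inl.comp (QuotientGroup.mk' K) with hf₁def
  set f₂ : FreeGroup (Fin n) →* G₁ := inr.comp ψ with hf₂def
  have hcompat : ∀ w, f₁.comp (φ w).toMonoidHom =
      (MulAut.conj (f₂ w)).toMonoidHom.comp f₁ := by
    intro w
    refine MonoidHom.ext fun g => ?_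
    show inl (QuotientGroup.mk (φ w g)) = _
    rw [← hψmk w g]
    show inl ((MonoidHom.id (MulAut (Γ ⧸ K)) (ψ w)) (QuotientGroup.mk g)) = _
    rw [inl_aut]
    simp [hf₁def, hf₂def, MulAut.conj_apply]
  refine ⟨e.toMonoidHom.comp (lift f₁ f₂ hcompat), ?_⟩
  rintro ⟨g, w⟩ hxF hfin
  -- the free part is trivial
  have hw1 : w = 1 := by
    have hwfin : IsOfFinOrder w := by
      have := (rightHom (φ := φ)).isOfFinOrder hfin
      simpa [rightHom] using this
    exact FreeGroup.eq_one_of_isOfFinOrder hwfin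
  subst hw1
  have hxeq : (⟨g, 1⟩ : Γ ⋊[φ] FreeGroup (Fin n)) = inl g := by ext <;> simp
  rw [hxeq] at hfin hxF ⊢
  have hordx : orderOf (inl g : Γ ⋊[φ] FreeGroup (Fin n)) = orderOf g :=
    orderOf_injective inl inl_injective g
  have hgfin : IsOfFinOrder g := by
    rw [← orderOf_pos_iff, ← hordx, orderOf_pos_iff]; exact hfin
  -- order is preserved in Γ ⧸ K
  have keyord : orderOf (QuotientGroup.mk g : Γ ⧸ K) = orderOf g := by
    set m := orderOf (QuotientGroup.mk g : Γ ⧸ K) with hmdef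
    have hmdvd : m ∣ orderOf g := orderOf_map_dvd (QuotientGroup.mk' K) g
    have hmfin : IsOfFinOrder (QuotientGroup.mk g : Γ ⧸ K) :=
      (QuotientGroup.mk' K).isOfFinOrder hgfin
    have hm0 : m ≠ 0 := (orderOf_pos_iff.mpr hmfin).ne'
    have hpow : g ^ m = 1 := by
      by_contra hne
      have hKm : g ^ m ∈ K := by
        have h1 : (QuotientGroup.mk (g ^ m) : Γ ⧸ K) = 1 := by
          have := pow_orderOf_eq_one (QuotientGroup.mk g : Γ ⧸ K)
          rw [← hmdef] at this
          rwa [← QuotientGroup.mk_pow] at this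
        exact (QuotientGroup.eq_one_iff _).mp h1
      have htT : g ^ m ∈ T := by
        rw [hTdef]
        refine Finset.mem_biUnion.mpr ⟨inl g, hxF, ?_⟩
        refine Finset.mem_image.mpr ⟨m, Finset.mem_range.mpr ?_, rfl⟩
        have hle : m ≤ orderOf g := Nat.le_of_dvd (orderOf_pos_iff.mpr hgfin) hmdvd
        show m < orderOf g + 1
        omega
      have hmkne : (QuotientGroup.mk (g ^ m) : Γ ⧸ Γ') ≠ 1 := by
        intro h1
        exact hne (htf _ ((QuotientGroup.eq_one_iff _).mp h1) (hgfin.pow))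
      have hK0 : f0 (g ^ m) = 1 := by
        rw [hKdef] at hKm
        exact Subgroup.mem_iInf.mp hKm f0
      have : frf (QuotientGroup.mk (g ^ m)) hmkne (QuotientGroup.mk (g ^ m)) = 1 := by
        have := congrFun (congrArg (fun q : Q₀ => (q : Q₀)) hK0) ⟨⟨g ^ m, htT⟩, hmkne⟩
        exact this
      exact hfrf (QuotientGroup.mk (g ^ m)) hmkne this
    exact Nat.dvd_antisymm hmdvd (orderOf_dvd_of_pow_eq_one hpow)
  calc orderOf (e.toMonoidHom.comp (lift f₁ f₂ hcompat) (inl g))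
      = orderOf (lift f₁ f₂ hcompat (inl g)) :=
        orderOf_injective e.toMonoidHom e.injective _
    _ = orderOf (inl (QuotientGroup.mk g : Γ ⧸ K) : G₁) := by rw [lift_inl]; rfl
    _ = orderOf (QuotientGroup.mk g : Γ ⧸ K) :=
        orderOf_injective inl inl_injective _
    _ = orderOf g := keyord
    _ = orderOf (inl g : Γ ⋊[φ] FreeGroup (Fin n)) := hordx.symm
end
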